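/- Let (r) be an LFSR sequence over F_m with primitive characteristic polynomial of degree n and period T = m^n − 1, and let α be a primitive complex m-th root of unity. Then the autocorrelation C(h) = Σ_{i=1}^{T} α^{r_i} · conj(α)^{r_{i+h}} equals T if h ≡ 0 (mod T) and equals −1 if h ≢ 0 (mod T). -/

import Mathlib

/-!
The root `x` of the primitive characteristic polynomial `f` generates the multiplicative group of
the field `K = 𝔽_m[X]/(f)` of order `m ^ n`. Since the trace form of `K/𝔽_m` is nondegenerate, `β`
can be chosen so that `r_i = Tr(x^i β)` for the `n` initial indices, and then for all `i` by the
recurrence; `β ≠ 0` because `r ≠ 0`. With the additive character `Ψ(z) = α ^ Tr(z)` of `K`, the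
`i`-th term of `C(h)` is `Ψ(x^i γ)` for `γ = (1 - x^h) β`, so `C(h)` is the sum of `Ψ` over the
nonzero multiples of `γ`: it is `T` if `γ = 0`, i.e. `T ∣ h`, and otherwise `0 - Ψ(0) = -1`.
-/

open Polynomial

/-- The characteristic polynomial `x^n - a₁ x^(n-1) - ... - aₙ`. -/
noncomputable def lfsrCharPoly (m n : ℕ) (a : Fin n → ZMod m) : Polynomial (ZMod m) :=
  Polynomial.X ^ n - ∑ k : Fin n, Polynomial.C (a k) * Polynomial.X ^ (n - (k.1 + 1))

/-- `f` is primitive: irreducible with a root generating `F_{m^n}^*`. -/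
def IsPrimitivePoly (m n : ℕ) (a : Fin n → ZMod m) : Prop :=
  Irreducible (lfsrCharPoly m n a) ∧
    orderOf (AdjoinRoot.root (lfsrCharPoly m n a)) = m ^ n - 1

theorem Polynomial.degree_sum_C_mul_X_pow_sub_succ_lt {R : Type*} [Semiring R] {n : ℕ}
    (c : Fin n → R) : (∑ k : Fin n, C (c k) * X ^ (n - (k.1 + 1))).degree < (n : WithBot ℕ) := by
  refine (degree_sum_le _ _).trans_lt ((Finset.sup_lt_iff (WithBot.bot_lt_coe n)).2 fun k _ => ?_)
  exact (degree_C_mul_X_pow_le _ _).trans_lt (Nat.cast_lt.2 (by omega))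

theorem natDegree_lfsrCharPoly {m n : ℕ} [Nontrivial (ZMod m)] (a : Fin n → ZMod m) :
    (lfsrCharPoly m n a).natDegree = n := by
  apply natDegree_eq_of_degree_eq_some
  rw [lfsrCharPoly, degree_sub_eq_left_of_degree_lt] <;> rw [degree_X_pow]
  exact degree_sum_C_mul_X_pow_sub_succ_lt a

theorem pow_eq_sum_of_aeval_lfsrCharPoly_eq_zero {m n : ℕ} {a : Fin n → ZMod m} {K : Type*}
    [Ring K] [Algebra (ZMod m) K] {x : K} (hx : aeval x (lfsrCharPoly m n a) = 0) :
    x ^ n = ∑ k : Fin n, algebraMap (ZMod m) K (a k) * x ^ (n - (k.1 + 1)) := by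
  simpa [lfsrCharPoly, sub_eq_zero, Algebra.smul_def] using hx

theorem AdjoinRoot.natCard_eq_pow_natDegree {F : Type*} [Field F] {f : F[X]} (hf : f ≠ 0) :
    Nat.card (AdjoinRoot f) = Nat.card F ^ f.natDegree := by
  have := (powerBasis hf).finite
  rw [Module.natCard_eq_pow_finrank (K := F), (powerBasis hf).finrank, powerBasis_dim]

theorem apply_pow_mul_eq_of_recurrence {R K : Type*} [CommSemiring R] [Semiring K] [Algebra R K]
    {n : ℕ} {a : Fin n → R} {x : K}
    (hx : x ^ n = ∑ k : Fin n, algebraMap R K (a k) * x ^ (n - (k.1 + 1)))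
    (L : K →ₗ[R] R) (β : K) {r : ℕ → R}
    (hrec : ∀ i, r (i + n) = ∑ k : Fin n, a k * r (i + n - (k.1 + 1)))
    (hinit : ∀ j < n, r j = L (x ^ j * β)) (i : ℕ) : r i = L (x ^ i * β) := by
  induction i using Nat.strong_induction_on with
  | _ i ih =>
    obtain hi | ⟨j, rfl⟩ : i < n ∨ ∃ j, i = j + n :=
      (lt_or_ge i n).imp_right fun hi => ⟨i - n, (Nat.sub_add_cancel hi).symm⟩
    · exact hinit i hi
    have hpow : x ^ (j + n) * β = ∑ k : Fin n, a k • (x ^ (j + n - (k.1 + 1)) * β) := by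
      rw [add_comm j n, pow_add, hx, Finset.sum_mul, Finset.sum_mul]
      refine Finset.sum_congr rfl fun k _ => ?_
      rw [Algebra.smul_def, (by omega : n + j - (k.1 + 1) = n - (k.1 + 1) + j), pow_add]
      simp only [mul_assoc]
    rw [hrec, hpow, map_sum]
    refine Finset.sum_congr rfl fun k _ => ?_
    rw [map_smul, smul_eq_mul, ih _ (by omega)]

theorem PowerBasis.exists_trace_gen_pow_mul_eq {F K : Type*} [Field F] [Field K] [Algebra F K]
    [Algebra.IsSeparable F K] (pb : PowerBasis F K) (v : Fin pb.dim → F) :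
    ∃ β : K, ∀ j : Fin pb.dim, Algebra.trace F K (pb.gen ^ (j : ℕ) * β) = v j := by
  have := pb.finite
  refine ⟨∑ i, v i • pb.basis.traceDual i, fun j => ?_⟩
  rw [← congrFun pb.coe_basis j, Finset.mul_sum, map_sum]
  simp_rw [mul_smul_comm, map_smul, Module.Basis.trace_mul_traceDual]
  simp

theorem exists_eq_trace_root_pow_mul_of_lfsr {m n : ℕ} [Fact m.Prime] {a : Fin n → ZMod m}
    {r : ℕ → ZMod m} (hirr : Irreducible (lfsrCharPoly m n a))
    (hrec : ∀ i, r (i + n) = ∑ k : Fin n, a k * r (i + n - (k.1 + 1))) :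
    ∃ β : AdjoinRoot (lfsrCharPoly m n a), ∀ i,
      r i = Algebra.trace (ZMod m) _ (AdjoinRoot.root (lfsrCharPoly m n a) ^ i * β) := by
  have : Fact (Irreducible (lfsrCharPoly m n a)) := ⟨hirr⟩
  let pb := AdjoinRoot.powerBasis hirr.ne_zero
  have := pb.finite
  have hdim : pb.dim = n := natDegree_lfsrCharPoly a
  obtain ⟨β, hβ⟩ := pb.exists_trace_gen_pow_mul_eq fun j => r j
  have hroot := pow_eq_sum_of_aeval_lfsrCharPoly_eq_zero
    (by rw [AdjoinRoot.aeval_eq, AdjoinRoot.mk_self] :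
      aeval (AdjoinRoot.root (lfsrCharPoly m n a)) (lfsrCharPoly m n a) = 0)
  exact ⟨β, apply_pow_mul_eq_of_recurrence hroot _ β hrec fun j hj => (hβ ⟨j, by omega⟩).symm⟩

theorem image_pow_range_orderOf_eq_erase_zero {G₀ : Type*} [GroupWithZero G₀] [Fintype G₀]
    [DecidableEq G₀] {x : G₀} (hx : orderOf x = Nat.card G₀ - 1) :
    (Finset.range (orderOf x)).image (x ^ ·) = Finset.univ.erase 0 := by
  have hx0 : x ≠ 0 := by
    rintro rfl
    have := Fintype.one_lt_card (α := G₀)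
    rw [Nat.card_eq_fintype_card, orderOf_eq_zero_iff'.2 fun k hk => by simp [hk.ne']] at hx
    omega
  refine Finset.eq_of_subset_of_card_le (fun y hy => ?_) ?_
  · obtain ⟨i, -, rfl⟩ := Finset.mem_image.1 hy
    exact Finset.mem_erase.2 ⟨pow_ne_zero _ hx0, Finset.mem_univ _⟩
  · rw [Finset.card_image_of_injOn (Finset.coe_range _ ▸ pow_injOn_Iio_orderOf), Finset.card_range,
      Finset.card_erase_of_mem (Finset.mem_univ _), Finset.card_univ, hx, Nat.card_eq_fintype_card]

theorem AddChar.sum_range_orderOf_apply_pow_mul {K R : Type*} [Field K] [Fintype K] [DecidableEq K]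
    [CommRing R] [IsDomain R] {Ψ : AddChar K R} (hΨ : Ψ ≠ 1) {x : K}
    (hx : orderOf x = Nat.card K - 1) (γ : K) :
    ∑ i ∈ Finset.range (orderOf x), Ψ (x ^ i * γ) = if γ = 0 then (orderOf x : R) else -1 := by
  split_ifs with hγ
  · simp [hγ]
  rw [← Finset.sum_image (f := fun z => Ψ (z * γ)) (Finset.coe_range _ ▸ pow_injOn_Iio_orderOf),
    image_pow_range_orderOf_eq_erase_zero hx, Finset.sum_erase_eq_sub (Finset.mem_univ 0),
    sum_mulShift γ (IsPrimitive.of_ne_one hΨ), if_neg hγ]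
  simp

theorem AddChar.compAddMonoidHom_ne_one {A B M : Type*} [AddMonoid A] [AddMonoid B] [Monoid M]
    {ψ : AddChar B M} (hψ : ψ ≠ 1) {f : A →+ B} (hf : Function.Surjective f) :
    ψ.compAddMonoidHom f ≠ 1 := by
  obtain ⟨b, hb⟩ := ne_one_iff.1 hψ
  obtain ⟨a, rfl⟩ := hf b
  exact ne_one_iff.2 ⟨a, hb⟩

theorem AddChar.pow_val_mul_conj_pow_val_eq_zmodChar {m : ℕ} [NeZero m] {α : ℂ} (hα : α ^ m = 1)
    (c d : ZMod m) : α ^ c.val * starRingEnd ℂ α ^ d.val = zmodChar m hα (c - d) := by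
  rw [← map_pow, ← zmodChar_apply hα, ← zmodChar_apply hα, ← inv_apply_eq_conj, ← div_eq_mul_inv,
    map_sub_eq_div]

theorem lfsr_autocorrelation_general (m n : ℕ) [Fact (Nat.Prime m)]
    (a : Fin n → ZMod m) (r : ℕ → ZMod m)
    (hrec : ∀ i, r (i + n) = ∑ k : Fin n, a k * r (i + n - (k.1 + 1)))
    (hprim : IsPrimitivePoly m n a)
    (hnz : ∃ j, j < n ∧ r j ≠ 0)
    (α : ℂ) (hα : IsPrimitiveRoot α m) (h : ℕ) :
    (h % (m ^ n - 1) = 0 →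
      ∑ i ∈ Finset.range (m ^ n - 1),
        α ^ (r i).val * (starRingEnd ℂ α) ^ (r (i + h)).val = ((m ^ n - 1 : ℕ) : ℂ)) ∧
    (h % (m ^ n - 1) ≠ 0 →
      ∑ i ∈ Finset.range (m ^ n - 1),
        α ^ (r i).val * (starRingEnd ℂ α) ^ (r (i + h)).val = -1) := by
  classical
  obtain ⟨hirr, hord⟩ := hprim
  set f := lfsrCharPoly m n a
  have : Fact (Irreducible f) := ⟨hirr⟩
  let pb := AdjoinRoot.powerBasis hirr.ne_zero
  have := pb.finite
  have : Fintype (AdjoinRoot f) := Module.fintypeOfFintype pb.basis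
  set x := AdjoinRoot.root f
  have horder : orderOf x = Nat.card (AdjoinRoot f) - 1 := by
    rw [hord, AdjoinRoot.natCard_eq_pow_natDegree hirr.ne_zero, Nat.card_zmod,
      natDegree_lfsrCharPoly]
  obtain ⟨β, hβ⟩ := exists_eq_trace_root_pow_mul_of_lfsr hirr hrec
  have hβ0 : β ≠ 0 := by
    obtain ⟨j, -, hj⟩ := hnz
    exact fun hβ0 => hj (by simp [hβ j, hβ0])
  let ψ := AddChar.zmodChar m hα.pow_eq_one
  let Ψ := ψ.compAddMonoidHom (Algebra.trace (ZMod m) (AdjoinRoot f)).toAddMonoidHom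
  have hΨ : Ψ ≠ 1 := AddChar.compAddMonoidHom_ne_one
    (by simpa using AddChar.zmodChar_primitive_of_primitive_root m hα one_ne_zero)
    (Algebra.trace_surjective _ _)
  have hterm : ∀ i, α ^ (r i).val * (starRingEnd ℂ α) ^ (r (i + h)).val =
      Ψ (x ^ i * ((1 - x ^ h) * β)) := by
    intro i
    rw [AddChar.pow_val_mul_conj_pow_val_eq_zmodChar hα.pow_eq_one, hβ, hβ, ← map_sub, pow_add]
    exact congrArg (fun z => ψ (Algebra.trace (ZMod m) (AdjoinRoot f) z)) (by ring)
  have hγ : (1 - x ^ h) * β = 0 ↔ h % (m ^ n - 1) = 0 := by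
    rw [mul_eq_zero, or_iff_left hβ0, sub_eq_zero, eq_comm, ← orderOf_dvd_iff_pow_eq_one, hord,
      Nat.dvd_iff_mod_eq_zero]
  simp_rw [hterm, ← hord, AddChar.sum_range_orderOf_apply_pow_mul hΨ horder, hγ, hord]
  exact ⟨fun h0 => if_pos h0, fun h0 => if_neg h0⟩

/-- Autocorrelations of a maximal period LFSR sequence:
`C(h) = ∑_{i=1}^{T} α^{r_i} conj(α)^{r_{i+h}}` equals `T` if `T ∣ h` and `-1` otherwise,
where `α` is a primitive complex `m`-th root of unity and `T = m^n - 1`. -/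
theorem lfsr_autocorrelation (m n : ℕ) [Fact (Nat.Prime m)] (hn : 0 < n)
    (a : Fin n → ZMod m) (r : ℕ → ZMod m)
    (hrec : ∀ i, r (i + n) = ∑ k : Fin n, a k * r (i + n - (k.1 + 1)))
    (hprim : IsPrimitivePoly m n a)
    (hper : ∀ i, r (i + (m ^ n - 1)) = r i)
    (hnz : ∃ j, j < n ∧ r j ≠ 0)
    (α : ℂ) (hα : IsPrimitiveRoot α m) (h : ℕ) :
    (h % (m ^ n - 1) = 0 →
      ∑ i ∈ Finset.range (m ^ n - 1),
        α ^ (r i).val * (starRingEnd ℂ α) ^ (r (i + h)).val = ((m ^ n - 1 : ℕ) : ℂ)) ∧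
    (h % (m ^ n - 1) ≠ 0 →
      ∑ i ∈ Finset.range (m ^ n - 1),
        α ^ (r i).val * (starRingEnd ℂ α) ^ (r (i + h)).val = -1) :=
  lfsr_autocorrelation_general m n a r hrec hprim hnz α hα h
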